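/- arXiv:1601.03423 — 6 statements merged into one kernel-verified Lean document; each statement's English description precedes it below -/
import Mathlib

section
/- Let D be a commutative C*-algebra and X a Hilbert D-module. If ξ, η ∈ X and there exists a positive contraction d ∈ D with ξ·d = ξ and η·d = 0, then ‖ξ + η‖ ≤ max(‖ξ‖, ‖η‖). -/
/-!
Put `a = ⟨ξ, ξ⟩` and `b = ⟨η, η⟩`. Since `d` fixes `ξ` and kills `η`, the inner products
`⟨ξ, η⟩`, `⟨η, ξ⟩` and the product `a * b` all vanish, so `‖ξ + η‖² = ‖a + b‖`, and for
orthogonal elements of a commutative C⋆-algebra `‖a + b‖ = max ‖a‖ ‖b‖` (Gelfand duality).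
-/

open scoped RightActions

/-- The December 2024 Mathlib `CStarModule`: a Hilbert C⋆-module with a right `A`-action. -/
class CStarModuleOp (A E : Type*) [NonUnitalSemiring A] [StarRing A]
    [Module ℂ A] [AddCommGroup E] [Module ℂ E] [PartialOrder A] [SMul Aᵐᵒᵖ E] [Norm A] [Norm E]
    extends Inner A E where
  inner_add_right {x} {y} {z} : inner x (y + z) = inner x y + inner x z
  inner_self_nonneg {x} : 0 ≤ inner x x
  inner_self {x} : inner x x = 0 ↔ x = 0
  inner_op_smul_right {a : A} {x y : E} : inner x (y <• a) = inner x y * a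
  inner_smul_right_complex {z : ℂ} {x} {y} : inner x (z • y) = z • inner x y
  star_inner x y : star (inner x y) = inner y x
  norm_eq_sqrt_norm_inner_self x : ‖x‖ = √‖inner x x‖

namespace CStarModuleOp

section Algebraic

variable {A E : Type*} [NonUnitalCommSemiring A] [StarRing A] [Module ℂ A] [AddCommGroup E]
  [Module ℂ E] [PartialOrder A] [SMul Aᵐᵒᵖ E] [Norm A] [Norm E] [CStarModuleOp A E]

lemma inner_zero_right (x : E) : inner A x (0 : E) = 0 := by
  simpa using inner_smul_right_complex (A := A) (z := 0) (x := x) (y := x)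

lemma inner_add_left (x y z : E) : inner A (x + y) z = inner A x z + inner A y z := by
  rw [← star_inner z (x + y), inner_add_right, star_add, star_inner, star_inner]

lemma inner_eq_inner_mul_of_op_smul_eq_self {x y : E} {d : A} (hy : y <• d = y) :
    inner A x y = inner A x y * d := by
  rw [← inner_op_smul_right, hy]

lemma inner_mul_eq_zero_of_op_smul_eq_zero {x y : E} {d : A} (hy : y <• d = 0) :
    inner A x y * d = 0 := by
  rw [← inner_op_smul_right, hy, inner_zero_right]

lemma inner_self_mul_inner_self_eq_zero {ξ η : E} {d : A} (hξ : ξ <• d = ξ) (hη : η <• d = 0) :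
    inner A ξ ξ * inner A η η = 0 := by
  rw [inner_eq_inner_mul_of_op_smul_eq_self hξ, mul_assoc, mul_comm d,
    inner_mul_eq_zero_of_op_smul_eq_zero hη, mul_zero]

lemma inner_self_add_of_inner_eq_zero {ξ η : E} (h : inner A ξ η = 0) :
    inner A (ξ + η) (ξ + η) = inner A ξ ξ + inner A η η := by
  have h' : inner A η ξ = 0 := by rw [← star_inner, h, star_zero]
  rw [inner_add_left, inner_add_right, inner_add_right, h, h', add_zero, zero_add]

end Algebraic

variable {D X : Type*} [NonUnitalCommCStarAlgebra D] [PartialOrder D]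
  [NormedAddCommGroup X] [Module ℂ X] [SMul Dᵐᵒᵖ X] [CStarModuleOp D X]

lemma inner_eq_zero_of_op_smul {ξ η : X} {d : D} (hξ : ξ <• d = ξ) (hη : η <• d = 0) :
    inner D ξ η = 0 := by
  -- `⟨ξ, η⟩⋆ ⟨ξ, η⟩ = ⟨η, ξ⟩ d ⟨ξ, η⟩ = ⟨η, ξ⟩ (⟨ξ, η⟩ d) = 0` by commutativity.
  rw [← CStarRing.star_mul_self_eq_zero_iff, star_inner,
    inner_eq_inner_mul_of_op_smul_eq_self hξ, mul_assoc, mul_comm d,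
    inner_mul_eq_zero_of_op_smul_eq_zero hη, mul_zero]

lemma norm_add_eq_max_of_op_smul {ξ η : X} {d : D} (hξ : ξ <• d = ξ) (hη : η <• d = 0) :
    ‖ξ + η‖ = max ‖ξ‖ ‖η‖ := by
  rw [norm_eq_sqrt_norm_inner_self (A := D), norm_eq_sqrt_norm_inner_self (A := D) ξ,
    norm_eq_sqrt_norm_inner_self (A := D) η, ← Real.sqrt_monotone.map_max,
    inner_self_add_of_inner_eq_zero (inner_eq_zero_of_op_smul hξ hη),
    CommCStarAlgebra.norm_add_eq_max (inner_self_mul_inner_self_eq_zero hξ hη)]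

end CStarModuleOp

theorem norm_add_le_max_of_smul_fixed_and_killed_general
    {D X : Type*} [NonUnitalCommCStarAlgebra D] [PartialOrder D]
    [NormedAddCommGroup X] [Module ℂ X] [SMul Dᵐᵒᵖ X] [CStarModuleOp D X]
    (ξ η : X) (d : D)
    (hξ : ξ <• d = ξ) (hη : η <• d = 0) :
    ‖ξ + η‖ ≤ max ‖ξ‖ ‖η‖ :=
  (CStarModuleOp.norm_add_eq_max_of_op_smul hξ hη).le

/-- If `ξ·d = ξ` and `η·d = 0` for a positive contraction `d` in a commutative
C*-algebra `D`, then `‖ξ + η‖ ≤ max ‖ξ‖ ‖η‖` in the Hilbert `D`-module `X`. -/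
theorem norm_add_le_max_of_smul_fixed_and_killed
    {D X : Type*} [NonUnitalCommCStarAlgebra D] [PartialOrder D] [StarOrderedRing D]
    [NormedAddCommGroup X] [Module ℂ X] [SMul Dᵐᵒᵖ X] [CStarModuleOp D X]
    (ξ η : X) (d : D) (hd0 : 0 ≤ d) (hd1 : ‖d‖ ≤ 1)
    (hξ : ξ <• d = ξ) (hη : η <• d = 0) :
    ‖ξ + η‖ ≤ max ‖ξ‖ ‖η‖ :=
  norm_add_le_max_of_smul_fixed_and_killed_general ξ η d hξ hη
end

section
/- In a Hilbert D-module over a commutative C*-algebra D, if ξ·d = ξ and η·d = 0 for a positive contraction d, then ⟨ξ+η, ξ+η⟩ ≤ max(‖ξ‖², ‖η‖²)·1 in the unitization of D. -/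
open scoped RightActions

/-!
The vectors `ξ` and `η` are orthogonal, since `⟪ξ, η⟫ = ⟪ξ, η⟫ d = ⟪ξ, d • η⟫ = 0`.
Moreover `⟪ξ, ξ⟫ = d ⟪ξ, ξ⟫ d ≤ ‖ξ‖² d²` and, as `⟪η, η⟫ d = 0`,
`⟪η, η⟫ = (1 - d) ⟪η, η⟫ (1 - d) ≤ ‖η‖² (1 - d)²`. It remains to note that
`d² + (1 - d)² = 1 - 2 (d - d²) ≤ 1` for `0 ≤ d ≤ 1`.
-/

lemma CStarAlgebra.le_norm_smul_mul_star_of_mul_eq {A : Type*} [NonUnitalCStarAlgebra A]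
    [PartialOrder A] [StarOrderedRing A] {a c : A} (ha : IsSelfAdjoint a) (hca : c * a = a) :
    a ≤ ‖a‖ • (c * star c) := by
  have hconj : c * a * star c = a := by
    rw [hca, ← ha.star_eq, ← star_mul, hca]
  simpa only [hconj] using CStarAlgebra.star_right_conjugate_le_norm_smul (a := c) ha

lemma CStarAlgebra.mul_self_add_one_sub_mul_self_le_one {A : Type*} [CStarAlgebra A]
    [PartialOrder A] [StarOrderedRing A] {d : A} (hd₀ : 0 ≤ d) (hd₁ : d ≤ 1) :
    d * d + (1 - d) * (1 - d) ≤ 1 := by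
  have hsq : d * d ≤ d := by simpa only [pow_two, pow_one] using CStarAlgebra.pow_antitone hd₀ hd₁ one_le_two
  calc d * d + (1 - d) * (1 - d) = 1 - 2 • (d - d * d) := by noncomm_ring
    _ ≤ 1 := sub_le_self _ (nsmul_nonneg (sub_nonneg.mpr hsq) 2)

lemma add_le_max_smul_of_le_smul_of_le_smul {M : Type*} [AddCommGroup M] [PartialOrder M]
    [IsOrderedAddMonoid M] [One M] [Module ℝ M] [PosSMulMono ℝ M] [SMulPosMono ℝ M]
    {a b p q : M} {s t : ℝ} (hs : 0 ≤ s) (ha : a ≤ s • p) (hb : b ≤ t • q) (hp : 0 ≤ p)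
    (hq : 0 ≤ q) (hpq : p + q ≤ 1) : a + b ≤ max s t • (1 : M) :=
  calc a + b ≤ max s t • p + max s t • q :=
        add_le_add (ha.trans (smul_le_smul_of_nonneg_right (le_max_left _ _) hp))
          (hb.trans (smul_le_smul_of_nonneg_right (le_max_right _ _) hq))
    _ = max s t • (p + q) := (smul_add _ _ _).symm
    _ ≤ max s t • (1 : M) := smul_le_smul_of_nonneg_left hpq (hs.trans (le_max_left _ _))

namespace CStarModule

lemma inner_self_add_of_inner_eq_zero {A E : Type*} [NonUnitalRing A] [StarRing A]
    [AddCommGroup E] [Module ℂ A] [Module ℂ E] [PartialOrder A] [SMul A E] [Norm A] [Norm E]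
    [CStarModule A E] {x y : E} (h : inner A x y = 0) :
    inner A (x + y) (x + y) = inner A x x + inner A y y := by
  have h' : inner A y x = 0 := by rw [← star_inner, h, star_zero]
  simp only [inner_add_left, inner_add_right, h, h', add_zero, zero_add]

lemma inner_self_le_norm_sq_smul_mul_star {A E : Type*} [NonUnitalCStarAlgebra A]
    [PartialOrder A] [StarOrderedRing A] [NormedAddCommGroup E] [Module ℂ E] [SMul A E]
    [CStarModule A E] {x : E} {c : A} (h : c * inner A x x = inner A x x) :
    inner A x x ≤ ‖x‖ ^ 2 • (c * star c) := by
  simpa only [← norm_sq_eq] using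
    CStarAlgebra.le_norm_smul_mul_star_of_mul_eq isSelfAdjoint_inner_self h

lemma inner_eq_zero_of_smul_eq_self_of_smul_eq_zero {D X : Type*}
    [CommCStarAlgebra D] [PartialOrder D] [NormedAddCommGroup X] [Module ℂ X] [SMul D X]
    [CStarModule D X] {ξ η : X} {d : D} (hd : IsSelfAdjoint d) (hξ : d • ξ = ξ)
    (hη : d • η = 0) : inner D ξ η = 0 :=
  calc inner D ξ η = inner D (d • ξ) η := by rw [hξ]
    _ = inner D ξ (d • η) := by rw [inner_op_smul_left, inner_op_smul_right, hd.star_eq, mul_comm]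
    _ = 0 := by rw [hη, inner_zero_right]

end CStarModule

/-- If `ξ·d = ξ` and `η·d = 0` for a positive contraction `d` in a (unital) commutative
C*-algebra `D`, then `⟪ξ+η, ξ+η⟫ ≤ max (‖ξ‖²) (‖η‖²) • 1` in `D`. -/
theorem inner_self_add_le_max_smul_one
    {D X : Type*} [CommCStarAlgebra D] [PartialOrder D] [StarOrderedRing D]
    [NormedAddCommGroup X] [Module ℂ X] [SMul D X] [CStarModule D X]
    (ξ η : X) (d : D) (hd0 : 0 ≤ d) (hd1 : ‖d‖ ≤ 1)
    (hξ : d • ξ = ξ) (hη : d • η = 0) :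
    (inner D (ξ + η) (ξ + η) : D) ≤ (max (‖ξ‖ ^ 2) (‖η‖ ^ 2)) • (1 : D) := by
  have hd : IsSelfAdjoint d := .of_nonneg hd0
  have hd' : IsSelfAdjoint (1 - d) := (IsSelfAdjoint.one (R := D)).sub hd
  have hξξ : inner D ξ ξ ≤ ‖ξ‖ ^ 2 • (d * d) := by
    simpa only [hd.star_eq] using CStarModule.inner_self_le_norm_sq_smul_mul_star (c := d)
      (by rw [← CStarModule.inner_op_smul_right, hξ])
  have hηη : inner D η η ≤ ‖η‖ ^ 2 • ((1 - d) * (1 - d)) := by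
    simpa only [hd'.star_eq] using CStarModule.inner_self_le_norm_sq_smul_mul_star (c := 1 - d)
      (by rw [sub_mul, one_mul, ← CStarModule.inner_op_smul_right, hη,
        CStarModule.inner_zero_right, sub_zero])
  rw [CStarModule.inner_self_add_of_inner_eq_zero
    (CStarModule.inner_eq_zero_of_smul_eq_self_of_smul_eq_zero hd hξ hη)]
  exact add_le_max_smul_of_le_smul_of_le_smul (by positivity) hξξ hηη hd.mul_self_nonneg
    hd'.mul_self_nonneg <| CStarAlgebra.mul_self_add_one_sub_mul_self_le_one hd0
      ((CStarAlgebra.norm_le_one_iff_of_nonneg d hd0).mp hd1)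
end

section
/- Let R be a transitive reflexive relation on a set S admitting a cocycle δ with values in ℕ (δ(x,z) = δ(x,y) + δ(y,z) for composable pairs, and δ(x,y) = 0 iff x = y) which is coherent: every pair (x,y) with δ(x,y) = k ≥ 2 can be written as a composition of k pairs each with δ-value 1. Then δ is the unique such coherent ℕ-valued cocycle on R. -/
/-- A cocycle on a reflexive transitive relation `R`: additive over composition and
vanishing exactly on the diagonal. -/
def IsCocycle {S : Type*} (R : S → S → Prop) (δ : S → S → ℕ) : Prop :=
  (∀ x y z, R x y → R y z → δ x z = δ x y + δ y z) ∧
    (∀ x y, R x y → (δ x y = 0 ↔ x = y))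

/-- Coherence: every pair of `δ`-value `k ≥ 2` factors as a composition of `k` pairs of
`δ`-value `1`. -/
def IsCoherent {S : Type*} (R : S → S → Prop) (δ : S → S → ℕ) : Prop :=
  ∀ x y (k : ℕ), R x y → δ x y = k → 2 ≤ k →
    ∃ c : Fin (k + 1) → S, c 0 = x ∧ c (Fin.last k) = y ∧
      ∀ i : Fin k, R (c i.castSucc) (c i.succ) ∧ δ (c i.castSucc) (c i.succ) = 1

/-!
A coherent cocycle `δ'` is bounded by every cocycle `δ` on the same relation, so two coherent
ones coincide. If `δ' x y = k ≥ 2`, coherence of `δ'` splits `(x, y)` into `k` steps between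
distinct points; each step has positive `δ`-value, so additivity of `δ` gives `k ≤ δ x y`.
For `δ' x y ≤ 1` the bound holds because both cocycles vanish exactly on the diagonal.
-/

section

variable {S : Type*} {R : S → S → Prop} {δ δ' : S → S → ℕ}

lemma rel_of_chain (hrefl : ∀ x, R x x) (htrans : ∀ x y z, R x y → R y z → R x z) :
    ∀ {k : ℕ} (c : Fin (k + 1) → S), (∀ i : Fin k, R (c i.castSucc) (c i.succ)) →
      R (c 0) (c (Fin.last k))
  | 0, c, _ => hrefl (c 0)
  | k + 1, c, hc =>
    htrans _ _ _ (rel_of_chain hrefl htrans (c ∘ Fin.castSucc) fun i => hc i.castSucc)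
      (hc (Fin.last k))

lemma IsCocycle.ne_zero_iff (hδ : IsCocycle R δ) {x y : S} (hxy : R x y) :
    δ x y ≠ 0 ↔ x ≠ y :=
  (hδ.2 x y hxy).not

lemma IsCocycle.length_le_of_chain (hrefl : ∀ x, R x x)
    (htrans : ∀ x y z, R x y → R y z → R x z) (hδ : IsCocycle R δ) :
    ∀ {k : ℕ} (c : Fin (k + 1) → S), (∀ i : Fin k, R (c i.castSucc) (c i.succ)) →
      (∀ i : Fin k, c i.castSucc ≠ c i.succ) → k ≤ δ (c 0) (c (Fin.last k))
  | 0, _, _, _ => Nat.zero_le _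
  | k + 1, c, hR, hne => by
    have ih := hδ.length_le_of_chain hrefl htrans (c ∘ Fin.castSucc)
      (fun i => hR i.castSucc) (fun i => hne i.castSucc)
    have hprefix := rel_of_chain hrefl htrans (c ∘ Fin.castSucc) fun i => hR i.castSucc
    have hlast := (hδ.ne_zero_iff (hR (Fin.last k))).mpr (hne (Fin.last k))
    have hsplit : δ (c 0) (c (Fin.last (k + 1))) =
        δ (c 0) (c (Fin.last k).castSucc) + δ (c (Fin.last k).castSucc) (c (Fin.last k).succ) :=
      hδ.1 _ _ _ hprefix (hR (Fin.last k))
    exact hsplit ▸ Nat.add_le_add ih (Nat.one_le_iff_ne_zero.mpr hlast)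

lemma IsCoherent.le_of_isCocycle (hrefl : ∀ x, R x x)
    (htrans : ∀ x y z, R x y → R y z → R x z) (hδ'c : IsCoherent R δ')
    (hδ' : IsCocycle R δ') (hδ : IsCocycle R δ) {x y : S} (hxy : R x y) :
    δ' x y ≤ δ x y := by
  rcases Nat.lt_or_ge (δ' x y) 2 with hsmall | hlarge
  · have hpos : δ' x y ≠ 0 → δ x y ≠ 0 := (hδ.ne_zero_iff hxy).mpr ∘ (hδ'.ne_zero_iff hxy).mp
    omega
  · obtain ⟨c, hc0, hclast, hc⟩ := hδ'c _ _ _ hxy rfl hlarge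
    have hne : ∀ i : Fin (δ' x y), c i.castSucc ≠ c i.succ := fun i =>
      (hδ'.ne_zero_iff (hc i).1).mp ((hc i).2 ▸ one_ne_zero)
    have hlen := hδ.length_le_of_chain hrefl htrans c (fun i => (hc i).1) hne
    rwa [hc0, hclast] at hlen

end

/-- A coherent ℕ-valued cocycle on a reflexive transitive relation is unique. -/
theorem coherent_cocycle_unique {S : Type*} (R : S → S → Prop)
    (hrefl : ∀ x, R x x) (htrans : ∀ x y z, R x y → R y z → R x z)
    (δ δ' : S → S → ℕ)
    (hδ : IsCocycle R δ) (hδc : IsCoherent R δ)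
    (hδ' : IsCocycle R δ') (hδ'c : IsCoherent R δ') :
    ∀ x y, R x y → δ' x y = δ x y := fun _ _ hxy =>
  le_antisymm (hδ'c.le_of_isCocycle hrefl htrans hδ' hδ hxy)
    (hδc.le_of_isCocycle hrefl htrans hδ hδ' hxy)
end

section
/- Let R be a reflexive transitive relation on a set S admitting a coherent ℕ-valued cocycle δ (additive over composition, δ⁻¹(0) = diagonal, every pair of value k ≥ 2 factors into k pairs of value 1). If δ' is another coherent ℕ-valued cocycle on R, then δ'(x,y) ≤ δ(x,y) for all (x,y) ∈ R. -/
/-!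
A factorisation of `(x, y)` into `n = δ' x y` steps of `δ'`-value `1` consists of steps
between distinct points, and a cocycle is positive off the diagonal, so each step contributes
at least `1` to `δ x y` by additivity.
-/

theorem rel_zero_last_of_chain {S : Type*} {R : S → S → Prop} (hrefl : ∀ x, R x x)
    (htrans : ∀ x y z, R x y → R y z → R x z) :
    ∀ {k : ℕ} (c : Fin (k + 1) → S), (∀ i : Fin k, R (c i.castSucc) (c i.succ)) →
      R (c 0) (c (Fin.last k))
  | 0, _, _ => hrefl _
  | k + 1, c, hc =>
    htrans _ _ _
      (rel_zero_last_of_chain hrefl htrans (fun i => c i.castSucc) fun i => hc i.castSucc)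
      (hc (Fin.last k))

namespace IsCocycle

variable {S : Type*} {R : S → S → Prop} {δ δ' : S → S → ℕ}

theorem apply_self (hδ : IsCocycle R δ) (hrefl : ∀ x, R x x) (x : S) : δ x x = 0 :=
  (hδ.2 x x (hrefl x)).2 rfl

theorem pos_of_pos (hδ : IsCocycle R δ) (hδ' : IsCocycle R δ') {x y : S} (hxy : R x y)
    (h : 0 < δ' x y) : 0 < δ x y := by
  rw [Nat.pos_iff_ne_zero, Ne, hδ.2 x y hxy, ← hδ'.2 x y hxy]
  exact h.ne'

theorem apply_zero_last_eq_sum (hδ : IsCocycle R δ) (hrefl : ∀ x, R x x)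
    (htrans : ∀ x y z, R x y → R y z → R x z) :
    ∀ {k : ℕ} (c : Fin (k + 1) → S), (∀ i : Fin k, R (c i.castSucc) (c i.succ)) →
      δ (c 0) (c (Fin.last k)) = ∑ i : Fin k, δ (c i.castSucc) (c i.succ)
  | 0, c, _ => by simp [hδ.apply_self hrefl]
  | k + 1, c, hc => by
    have hinit : ∀ i : Fin k, R (c i.castSucc.castSucc) (c i.succ.castSucc) :=
      fun i => hc i.castSucc
    rw [Fin.sum_univ_castSucc]
    simp only [Fin.succ_castSucc]
    rw [← hδ.apply_zero_last_eq_sum hrefl htrans (fun i => c i.castSucc) hinit]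
    exact hδ.1 _ _ _ (rel_zero_last_of_chain hrefl htrans (fun i => c i.castSucc) hinit)
      (hc (Fin.last k))

theorem length_le_apply_of_chain (hδ : IsCocycle R δ) (hrefl : ∀ x, R x x)
    (htrans : ∀ x y z, R x y → R y z → R x z) {k : ℕ} (c : Fin (k + 1) → S)
    (hc : ∀ i : Fin k, R (c i.castSucc) (c i.succ))
    (hpos : ∀ i : Fin k, 0 < δ (c i.castSucc) (c i.succ)) :
    k ≤ δ (c 0) (c (Fin.last k)) :=
  calc k = ∑ _i : Fin k, 1 := by simp
    _ ≤ ∑ i : Fin k, δ (c i.castSucc) (c i.succ) := Finset.sum_le_sum fun i _ => hpos i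
    _ = δ (c 0) (c (Fin.last k)) := (hδ.apply_zero_last_eq_sum hrefl htrans c hc).symm

end IsCocycle

theorem coherent_cocycle_le_general {S : Type*} (R : S → S → Prop)
    (hrefl : ∀ x, R x x) (htrans : ∀ x y z, R x y → R y z → R x z)
    (δ δ' : S → S → ℕ)
    (hδ : IsCocycle R δ)
    (hδ' : IsCocycle R δ') (hδ'c : IsCoherent R δ') :
    ∀ x y, R x y → δ' x y ≤ δ x y := by
  intro x y hxy
  by_cases hn : 2 ≤ δ' x y
  · obtain ⟨c, hc0, hcl, hc⟩ := hδ'c x y _ hxy rfl hn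
    have hstep_pos : ∀ i : Fin (δ' x y), 0 < δ (c i.castSucc) (c i.succ) := fun i =>
      hδ.pos_of_pos hδ' (hc i).1 ((hc i).2 ▸ Nat.one_pos)
    have := hδ.length_le_apply_of_chain hrefl htrans c (fun i => (hc i).1) hstep_pos
    rwa [hc0, hcl] at this
  · have := hδ.pos_of_pos hδ' hxy
    omega

/-- If `δ` and `δ'` are coherent ℕ-valued cocycles on `R`, then `δ' ≤ δ` pointwise on `R`. -/
theorem coherent_cocycle_le {S : Type*} (R : S → S → Prop)
    (hrefl : ∀ x, R x x) (htrans : ∀ x y z, R x y → R y z → R x z)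
    (δ δ' : S → S → ℕ)
    (hδ : IsCocycle R δ) (hδc : IsCoherent R δ)
    (hδ' : IsCocycle R δ') (hδ'c : IsCoherent R δ') :
    ∀ x y, R x y → δ' x y ≤ δ x y :=
  coherent_cocycle_le_general R hrefl htrans δ δ' hδ hδ' hδ'c
end

section
/- Let G be a finite out-tree and let G_red be its reduction: contract every maximal directed path through vertices emitting exactly one edge into a single weighted edge, recording the path length as a weight. Then two out-trees G and H are isomorphic as directed graphs if and only if G_red and H_red are isomorphic as weighted graphs (a graph isomorphism preserving the weights of vertices/edges). -/
/-- Finite rooted (out-)trees. -/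
inductive RTree : Type
  | node : List RTree → RTree

/-- Isomorphism of rooted trees. -/
inductive RTree.Iso : RTree → RTree → Prop
  | node (cs cs' l : List RTree) (hp : l.Perm cs') (h : List.Forall₂ RTree.Iso cs l) :
      RTree.Iso (.node cs) (.node cs')

/-- Weighted rooted trees: each vertex carries a weight recording the length of the
contracted path above it. -/
inductive WTree : Type
  | node : ℕ → List WTree → WTree

/-- Isomorphism of weighted rooted trees: a rooted tree isomorphism preserving weights. -/
inductive WTree.Iso : WTree → WTree → Prop
  | node (w : ℕ) (cs cs' l : List WTree) (hp : l.Perm cs') (h : List.Forall₂ WTree.Iso cs l) :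
      WTree.Iso (.node w cs) (.node w cs')

/-- Increase the weight at the root by one (one more contracted edge). -/
def WTree.bump : WTree → WTree
  | .node w l => .node (w + 1) l

/-- The reduction of an out-tree: maximal directed paths through vertices emitting exactly
one edge are contracted to a single vertex, whose weight records the path length. -/
def RTree.red : RTree → WTree
  | .node [c] => WTree.bump c.red
  | .node cs => .node 0 (cs.attach.map fun x => x.1.red)
decreasing_by
  · simp; omega
  · have := List.sizeOf_lt_of_mem x.2
    simp only [RTree.node.sizeOf_spec] at *
    omega


/-!
Induct on `G`. A root with a single child is erased by `red` at the cost of one unit of weight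
on the reduced child, while every other root becomes a root of weight `0` over its reduced
children. So root weights separate the two kinds of roots, `bump` cancels on both sides, and
for the other roots a matching of children up to permutation is the same before and after
reduction.
-/

open List Relation

namespace List

variable {α β : Type*}

theorem forall₂_congr_of_mem {R S : α → β → Prop} {l₁ : List α} {l₂ : List β}
    (h : ∀ a ∈ l₁, ∀ b, R a b ↔ S a b) : Forall₂ R l₁ l₂ ↔ Forall₂ S l₁ l₂ := by
  have restrict : ∀ {R}, Forall₂ R l₁ l₂ → Forall₂ (fun a b => a ∈ l₁ ∧ R a b) l₁ l₂ :=
    fun hR => (forall₂_and_left _ _).2 ⟨fun _ ha => ha, hR⟩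
  exact ⟨fun hR => (restrict hR).imp fun a b ⟨ha, hab⟩ => (h a ha b).1 hab,
    fun hS => (restrict hS).imp fun a b ⟨ha, hab⟩ => (h a ha b).2 hab⟩

theorem comp_forall₂_perm_map_iff {f : α → β} {R : α → α → Prop} {S : β → β → Prop}
    {as bs : List α} (h : ∀ a ∈ as, ∀ b, R a b ↔ S (f a) (f b)) :
    Comp (Forall₂ S) Perm (as.map f) (bs.map f) ↔ Comp (Forall₂ R) Perm as bs := by
  have hmap : ∀ {t}, Forall₂ S (as.map f) (t.map f) ↔ Forall₂ R as t := fun {t} => by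
    rw [forall₂_map_left_iff, forall₂_map_right_iff, forall₂_congr_of_mem h]
  constructor
  · rintro ⟨m, hm, hperm⟩
    have hm_map : Comp (· = map f ·) Perm m bs := by rwa [eq_map_comp_perm]
    obtain ⟨t, rfl, ht⟩ := hm_map
    exact ⟨t, hmap.1 hm, ht⟩
  · rintro ⟨t, ht, hperm⟩
    exact ⟨t.map f, hmap.2 ht, hperm.map f⟩

end List

namespace WTree

theorem iso_node_iff {v w : ℕ} {cs ds : List WTree} :
    WTree.Iso (.node v cs) (.node w ds) ↔ v = w ∧ Comp (Forall₂ WTree.Iso) Perm cs ds := by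
  constructor
  · rintro ⟨_, _, _, l, hp, h⟩
    exact ⟨rfl, l, h, hp⟩
  · rintro ⟨rfl, l, h, hp⟩
    exact .node v cs ds l hp h

theorem bump_iso_bump_iff {s t : WTree} : WTree.Iso s.bump t.bump ↔ WTree.Iso s t := by
  cases s; cases t
  simp only [bump, iso_node_iff, Nat.add_right_cancel_iff]

theorem not_bump_iso_node_zero (s : WTree) (ds : List WTree) :
    ¬ WTree.Iso s.bump (.node 0 ds) := by
  cases s
  simp [bump, iso_node_iff]

theorem not_node_zero_iso_bump (cs : List WTree) (t : WTree) :
    ¬ WTree.Iso (.node 0 cs) t.bump := by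
  cases t
  simp [bump, iso_node_iff]

end WTree

namespace RTree

@[elab_as_elim]
theorem induction_on_mem {motive : RTree → Prop}
    (node : ∀ cs, (∀ c ∈ cs, motive c) → motive (.node cs)) : ∀ t, motive t
  | .node cs => node cs fun c _ => induction_on_mem node c
decreasing_by
  have := List.sizeOf_lt_of_mem ‹c ∈ cs›
  simp only [RTree.node.sizeOf_spec]
  omega

theorem iso_node_iff {cs ds : List RTree} :
    RTree.Iso (.node cs) (.node ds) ↔ Comp (Forall₂ RTree.Iso) Perm cs ds := by
  constructor
  · rintro ⟨_, _, l, hp, h⟩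
    exact ⟨l, h, hp⟩
  · rintro ⟨l, h, hp⟩
    exact .node cs ds l hp h

theorem Iso.length_eq {cs ds : List RTree} (h : RTree.Iso (.node cs) (.node ds)) :
    cs.length = ds.length := by
  obtain ⟨l, hl, hp⟩ := iso_node_iff.1 h
  exact hl.length_eq.trans hp.length_eq

theorem iso_singleton_iff {c d : RTree} : RTree.Iso (.node [c]) (.node [d]) ↔ RTree.Iso c d := by
  simp [iso_node_iff, Comp, forall₂_cons_left_iff]

theorem red_singleton (c : RTree) : (RTree.node [c]).red = c.red.bump := by
  rw [red]

theorem red_node_of_length_ne_one {cs : List RTree} (h : cs.length ≠ 1) :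
    (RTree.node cs).red = .node 0 (cs.map red) := by
  match cs, h with
  | [], _ => rw [red] <;> simp
  | _ :: _ :: _, _ => rw [red] <;> simp

theorem iso_node_iff_red_iso {cs ds : List RTree}
    (ih : ∀ c ∈ cs, ∀ d, RTree.Iso c d ↔ WTree.Iso c.red d.red) :
    RTree.Iso (.node cs) (.node ds) ↔ WTree.Iso (RTree.node cs).red (RTree.node ds).red := by
  by_cases hc : cs.length = 1 <;> by_cases hd : ds.length = 1
  · obtain ⟨c, rfl⟩ := List.length_eq_one_iff.1 hc
    obtain ⟨d, rfl⟩ := List.length_eq_one_iff.1 hd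
    rw [red_singleton, red_singleton, WTree.bump_iso_bump_iff, iso_singleton_iff]
    exact ih c (mem_singleton_self c) d
  · obtain ⟨c, rfl⟩ := List.length_eq_one_iff.1 hc
    rw [red_singleton, red_node_of_length_ne_one hd]
    exact iff_of_false (fun h => hd (h.length_eq ▸ hc)) (WTree.not_bump_iso_node_zero _ _)
  · obtain ⟨d, rfl⟩ := List.length_eq_one_iff.1 hd
    rw [red_singleton, red_node_of_length_ne_one hc]
    exact iff_of_false (fun h => hc (h.length_eq ▸ hd)) (WTree.not_node_zero_iso_bump _ _)
  · rw [red_node_of_length_ne_one hc, red_node_of_length_ne_one hd, iso_node_iff,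
      WTree.iso_node_iff, comp_forall₂_perm_map_iff ih]
    exact (and_iff_right rfl).symm

end RTree

/-- Two out-trees are isomorphic iff their reductions are isomorphic as weighted trees. -/
theorem iso_iff_red_iso (G H : RTree) :
    RTree.Iso G H ↔ WTree.Iso G.red H.red := by
  induction G using RTree.induction_on_mem generalizing H with
  | node cs ih =>
    cases H
    exact RTree.iso_node_iff_red_iso ih
end

section
/- Let R be a finite reflexive transitive antisymmetric relation (a partial order) on S with the tree property (elements above a common element are comparable) admitting a coherent ℕ-valued cocycle δ. Then the graph G whose vertices are the elements of S and whose edges are the pairs with δ-value 1 (an edge from y to x whenever δ(x,y) = 1) is an out-forest, and R is the reflexive-transitive closure of G. -/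
/-- Let `R` be a finite partial order with the tree property admitting a coherent ℕ-valued
cocycle `δ`. Then the graph `G` with an edge from `y` to `x` whenever `δ x y = 1` is an
out-forest (in-degree at most one and no cycles), and `R` is the reflexive-transitive
closure of `G`: `R x y` iff there is a directed path from `y` to `x` in `G`. -/
theorem out_forest_of_tree_order_with_cocycle {S : Type*} [Fintype S] (R : S → S → Prop)
    (hrefl : ∀ x, R x x) (htrans : ∀ x y z, R x y → R y z → R x z)
    (hantisymm : ∀ x y, R x y → R y x → x = y)
    (htree : ∀ x y z, R x y → R x z → R y z ∨ R z y)
    (δ : S → S → ℕ)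
    (hadd : ∀ x y z, R x y → R y z → δ x z = δ x y + δ y z)
    (hzero : ∀ x y, R x y → (δ x y = 0 ↔ x = y))
    (hcoh : ∀ x y (k : ℕ), R x y → δ x y = k → 2 ≤ k →
      ∃ c : Fin (k + 1) → S, c 0 = x ∧ c (Fin.last k) = y ∧
        ∀ i : Fin k, R (c i.castSucc) (c i.succ) ∧ δ (c i.castSucc) (c i.succ) = 1) :
    (∀ x y z : S, (R x y ∧ δ x y = 1) → (R x z ∧ δ x z = 1) → y = z) ∧
    (∀ x : S, ¬ Relation.TransGen (fun a b => R b a ∧ δ b a = 1) x x) ∧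
    (∀ x y : S, R x y ↔ Relation.ReflTransGen (fun a b => R b a ∧ δ b a = 1) y x) := by
  have key : ∀ x y, R x y → Relation.ReflTransGen (fun a b => R b a ∧ δ b a = 1) y x := by
    intro x y hxy
    by_cases h0 : δ x y = 0
    · have := (hzero x y hxy).mp h0; subst this; exact .refl
    · by_cases h1 : δ x y = 1
      · exact Relation.ReflTransGen.single ⟨hxy, h1⟩
      · obtain ⟨c, hc0, hclast, hstep⟩ := hcoh x y (δ x y) hxy rfl (by omega)
        have main : ∀ i : Fin (δ x y + 1),
            Relation.ReflTransGen (fun a b => R b a ∧ δ b a = 1) (c i) x := by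
          intro i
          induction i using Fin.induction with
          | zero => rw [hc0]
          | succ i ih =>
            exact Relation.ReflTransGen.head ⟨(hstep i).1, (hstep i).2⟩ ih
        have := main (Fin.last _); rw [hclast] at this; exact this
  refine ⟨?_, ?_, ?_⟩
  · rintro x y z ⟨hxy, h1⟩ ⟨hxz, h2⟩
    rcases htree x y z hxy hxz with h | h
    · have := hadd x y z hxy h
      exact (hzero y z h).mp (by omega)
    · have := hadd x z y hxz h
      exact ((hzero z y h).mp (by omega)).symm
  · intro x hx
    have claim : ∀ a b, Relation.TransGen (fun a b => R b a ∧ δ b a = 1) a b →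
        R b a ∧ 1 ≤ δ b a := by
      intro a b h
      induction h with
      | single h => exact ⟨h.1, by omega⟩
      | tail _ h ih =>
        refine ⟨htrans _ _ _ h.1 ih.1, ?_⟩
        have := hadd _ _ _ h.1 ih.1
        omega
    obtain ⟨h1, h2⟩ := claim x x hx
    have := (hzero x x h1).mpr rfl
    omega
  · intro x y
    constructor
    · exact key x y
    · intro h
      induction h with
      | refl => exact hrefl y
      | tail _ h ih => exact htrans _ _ _ h.1 ih
end
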